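/- arXiv:2103.01565 — 2 statements merged into one kernel-verified Lean document; each statement's English description precedes it below -/
import Mathlib

section
/- Let p be a prime, n ≥ 1 and δ ≥ 0 integers, and let Ω = (ℤ/pⁿℤ)^δ. Let X be a free ℤ-module of rank ρ ≥ 0 and let f : X → Ω be a group homomorphism such that the composite map X → Ω/pΩ has image of 𝔽_p-dimension equal to min(ρ, δ). Then the image f(X) has order p^{min(ρ,δ)·n}. -/
/-!
Write `d = min ρ δ`. Since `X ≅ ℤ^ρ`, the subgroup `f(X)` is spanned over `ℤ/pⁿ` by `ρ` vectors,
and it lies in `Ω`, so `#f(X) ≤ p^(n d)`. Conversely, pick `x₁, …, x_d ∈ X` whose images in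
`Ω/pΩ` are `𝔽_p`-independent. Then the `f(xᵢ)` are `ℤ/pⁿ`-independent: if `∑ cᵢ f(xᵢ) = 0` and
`pᵐ` divides every `cᵢ` with `m < n`, write `cᵢ = pᵐ aᵢ`; then `∑ aᵢ f(xᵢ)` is killed by `pᵐ`,
hence lies in `pΩ`, so `p` divides every `aᵢ`. Their span, of order `p^(n d)`, lies in `f(X)`.
-/

open Module

theorem exists_linearIndependent_comp_of_finrank_span_range {K V ι : Type*} [Field K]
    [AddCommGroup V] [Module K V] [FiniteDimensional K V] (v : ι → V) {d : ℕ}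
    (hd : finrank K (Submodule.span K (Set.range v)) = d) :
    ∃ x : Fin d → ι, LinearIndependent K (v ∘ x) := by
  obtain ⟨κ, a, -, hspan, hli⟩ := exists_linearIndependent' K v
  have : Finite κ := hli.finite
  have : Fintype κ := Fintype.ofFinite κ
  have hcard : Fintype.card κ = d := by rw [← finrank_span_eq_card hli, hspan, hd]
  let e : Fin d ≃ κ := (Fintype.equivFinOfCardEq hcard).symm
  exact ⟨a ∘ e, hli.comp e e.injective⟩

section Card

variable {R M ι : Type*} [Ring R] [AddCommGroup M] [Module R M] [Fintype ι]

theorem Submodule.natCard_span_range_le [Finite R] (v : ι → M) :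
    Nat.card (span R (Set.range v)) ≤ Nat.card R ^ Fintype.card ι := by
  rw [← Fintype.range_linearCombination]
  calc Nat.card (LinearMap.range (Fintype.linearCombination R v))
      ≤ Nat.card (ι → R) := Finite.card_range_le _
    _ = Nat.card R ^ Fintype.card ι := by rw [Nat.card_fun, Nat.card_eq_fintype_card (α := ι)]

theorem LinearIndependent.natCard_span {v : ι → M} (hv : LinearIndependent R v) :
    Nat.card (Submodule.span R (Set.range v)) = Nat.card R ^ Fintype.card ι := by
  rw [← Nat.card_congr hv.linearCombinationEquiv.toEquiv,
    Nat.card_congr (Finsupp.equivFunOnFinite (α := ι) (M := R)), Nat.card_fun,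
    Nat.card_eq_fintype_card (α := ι)]

end Card

theorem AddMonoidHom.range_subset_span_basis {X M R ι : Type*} [AddCommGroup X] [Module ℤ X]
    [Ring R] [AddCommGroup M] [Module R M] (B : Basis ι ℤ X) (f : X →+ M) :
    Set.range f ⊆ Submodule.span R (Set.range (f ∘ B)) := by
  rintro _ ⟨y, rfl⟩
  rw [← B.linearCombination_repr y, Finsupp.linearCombination_apply, Finsupp.sum, map_sum]
  refine Submodule.sum_mem _ fun i _ => ?_
  have h := map_intCast_smul f ℤ R (B.repr y i) (B i)
  rw [Int.cast_id] at h
  rw [h]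
  exact Submodule.smul_mem _ _ (Submodule.subset_span ⟨i, rfl⟩)

namespace ZMod

variable {p n : ℕ} [Fact p.Prime]

theorem dvd_of_castHom_eq_zero (hn : n ≠ 0) {y : ZMod (p ^ n)}
    (hy : castHom (dvd_pow_self p hn) (ZMod p) y = 0) : (p : ZMod (p ^ n)) ∣ y := by
  rw [castHom_apply, ← natCast_val, natCast_eq_zero_iff] at hy
  obtain ⟨k, hk⟩ := hy
  exact ⟨k, by rw [← natCast_zmod_val y, hk, Nat.cast_mul]⟩

theorem castHom_eq_zero_of_pow_mul_eq_zero {m : ℕ} (hmn : m < n) {y : ZMod (p ^ n)}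
    (hy : (p : ZMod (p ^ n)) ^ m * y = 0) :
    castHom (dvd_pow_self p (by omega)) (ZMod p) y = 0 := by
  rw [← natCast_zmod_val y, ← Nat.cast_pow, ← Nat.cast_mul, natCast_eq_zero_iff] at hy
  have hsplit : p ^ m * p ^ (n - m) ∣ p ^ m * y.val := by
    rwa [← pow_add, Nat.add_sub_cancel' hmn.le]
  rw [castHom_apply, ← natCast_val, natCast_eq_zero_iff]
  exact (dvd_pow_self p (by omega)).trans
    ((Nat.mul_dvd_mul_iff_left (pow_pos (Fact.out : p.Prime).pos m)).mp hsplit)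

variable {ι κ : Type*} [Fintype ι]

theorem dvd_of_pow_smul_sum_eq_zero (hn : n ≠ 0) {v : ι → κ → ZMod (p ^ n)}
    (hv : LinearIndependent (ZMod p) fun i j => castHom (dvd_pow_self p hn) (ZMod p) (v i j))
    {m : ℕ} (hmn : m < n) {a : ι → ZMod (p ^ n)}
    (ha : (p : ZMod (p ^ n)) ^ m • ∑ i, a i • v i = 0) (i : ι) : (p : ZMod (p ^ n)) ∣ a i := by
  refine dvd_of_castHom_eq_zero hn
    (Fintype.linearIndependent_iff.mp hv (fun i => castHom _ _ (a i)) ?_ i)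
  funext j
  simp only [Finset.sum_apply, Pi.smul_apply, smul_eq_mul, ← map_mul, ← map_sum, Pi.zero_apply]
  refine castHom_eq_zero_of_pow_mul_eq_zero hmn ?_
  simpa [Finset.sum_apply, Finset.mul_sum] using congrFun ha j

theorem linearIndependent_of_linearIndependent_castHom (hn : n ≠ 0) {v : ι → κ → ZMod (p ^ n)}
    (hv : LinearIndependent (ZMod p) fun i j => castHom (dvd_pow_self p hn) (ZMod p) (v i j)) :
    LinearIndependent (ZMod (p ^ n)) v := by
  rw [Fintype.linearIndependent_iff]
  intro c hc
  have hdvd : ∀ m ≤ n, ∀ i, (p : ZMod (p ^ n)) ^ m ∣ c i := by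
    intro m
    induction m with
    | zero => simp
    | succ m ih =>
      intro hm
      choose a ha using ih (by omega)
      have hpa := dvd_of_pow_smul_sum_eq_zero hn hv (by omega : m < n) (a := a) (by
        simpa only [Finset.smul_sum, smul_smul, ← ha] using hc)
      intro i
      rw [ha i, pow_succ]
      exact mul_dvd_mul_left _ (hpa i)
  intro i
  obtain ⟨b, hb⟩ := hdvd n le_rfl i
  rw [hb, ← Nat.cast_pow, natCast_self, zero_mul]

end ZMod

/-- Let `p` be a prime, `n ≥ 1`, `δ ≥ 0`, and `Ω = (ℤ/pⁿℤ)^δ`.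
Let `X` be a free `ℤ`-module of rank `ρ` and `f : X → Ω` a group homomorphism such that the
composite `X → Ω/pΩ` (reduction mod `p` in each coordinate) has image of `𝔽_p`-dimension
`min ρ δ`.  Then `#f(X) = p ^ (min ρ δ * n)`. -/
theorem stmt_0 (p : ℕ) (hp : p.Prime) (n δ ρ : ℕ) (hn : 1 ≤ n)
    (X : Type*) [AddCommGroup X] [Module ℤ X] [Module.Free ℤ X] [Module.Finite ℤ X]
    (hX : Module.finrank ℤ X = ρ)
    (f : X →+ (Fin δ → ZMod (p ^ n)))
    (hdim : Module.finrank (ZMod p)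
      (Submodule.span (ZMod p)
        (Set.range (fun x : X =>
          (fun i => ZMod.castHom (dvd_pow_self p (Nat.one_le_iff_ne_zero.mp hn)) (ZMod p)
            (f x i) : Fin δ → ZMod p)))) = min ρ δ) :
    Nat.card (Set.range f) = p ^ (min ρ δ * n) := by
  have : Fact p.Prime := ⟨hp⟩
  obtain ⟨x, hx⟩ := exists_linearIndependent_comp_of_finrank_span_range _ hdim
  have hli := ZMod.linearIndependent_of_linearIndependent_castHom (by omega) (v := f ∘ x) hx
  have hspan : (Submodule.span (ZMod (p ^ n)) (Set.range (f ∘ x)) : Set _) ⊆ Set.range f := by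
    rw [← AddMonoidHom.coe_range, ← AddSubgroup.coe_toZModSubmodule (p ^ n),
      SetLike.coe_subset_coe, Submodule.span_le]
    rintro _ ⟨i, rfl⟩
    exact ⟨x i, rfl⟩
  have hlower : (p ^ n) ^ min ρ δ ≤ Nat.card (Set.range f) := by
    calc (p ^ n) ^ min ρ δ = Nat.card (Submodule.span (ZMod (p ^ n)) (Set.range (f ∘ x))) := by
          rw [hli.natCard_span, Nat.card_zmod, Fintype.card_fin]
      _ ≤ Nat.card (Set.range f) := Nat.card_mono (Set.toFinite _) hspan
  have hupper_rank : Nat.card (Set.range f) ≤ (p ^ n) ^ ρ := by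
    let B := Module.finBasisOfFinrankEq ℤ X hX
    calc Nat.card (Set.range f) ≤ Nat.card (Submodule.span (ZMod (p ^ n)) (Set.range (f ∘ B))) :=
          Nat.card_mono (Set.toFinite _) (f.range_subset_span_basis B)
      _ ≤ (p ^ n) ^ ρ := by
          simpa only [Nat.card_zmod, Fintype.card_fin] using Submodule.natCard_span_range_le (R := ZMod (p ^ n)) (f ∘ B)
  have hupper_dim : Nat.card (Set.range f) ≤ (p ^ n) ^ δ := by
    calc Nat.card (Set.range f) ≤ Nat.card (Fin δ → ZMod (p ^ n)) := Finite.card_subtype_le _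
      _ = (p ^ n) ^ δ := by rw [Nat.card_fun, Nat.card_zmod, Nat.card_fin]
  rw [pow_mul']
  refine le_antisymm ?_ hlower
  rcases le_total ρ δ with h | h
  · rwa [min_eq_left h]
  · rwa [min_eq_right h]
end

section
/- Let p be a prime and M a finite abelian p-group equipped with an automorphism σ of p-power order. If the fixed-point subgroups of σ and of σ^p coincide (M^σ = M^{σ^p}), then σ is the identity on M. -/
/-!
Let `T` be the image of `x ↦ σ x / x`. It is a `σ`-stable finite `p`-group on which the
`p`-group generated by `σ` acts, so if `T ≠ 1` then `σ` fixes some `c = σ x / x ≠ 1`.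
Replacing `x` by `x ^ p ^ k` we may take `c` of order `p`; then `(σ ^ p) x = x * c ^ p = x`,
so `σ x = x` by hypothesis, i.e. `c = 1`. Hence `T = 1`, that is, `σ = 1`.
-/

theorem MulAut.pow_apply_of_apply_eq_mul {M : Type*} [Monoid M] (σ : MulAut M) {y c : M}
    (hy : σ y = y * c) (hc : σ c = c) (n : ℕ) : (σ ^ n) y = y * c ^ n := by
  induction n with
  | zero => simp
  | succ n ih =>
    rw [pow_succ', MulAut.mul_apply, ih, map_mul, hy, map_pow, hc, mul_assoc, ← pow_succ']

theorem IsPGroup.zpowers_of_pow_eq_one {p : ℕ} [Fact p.Prime] {G : Type*} [Group G] {g : G}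
    {j : ℕ} (hg : g ^ p ^ j = 1) : IsPGroup p (Subgroup.zpowers g) :=
  IsPGroup.of_card_dvd_pow (n := j) (Nat.card_zpowers g ▸ orderOf_dvd_of_pow_eq_one hg)

theorem IsPGroup.exists_ne_one_mem_fixedPoints {p : ℕ} [Fact p.Prime] {G M : Type*} [Group G]
    [Group M] [MulDistribMulAction G M] (hG : IsPGroup p G) {H : Subgroup M} [Finite H]
    (hH : IsPGroup p H) (hstable : ∀ g : G, ∀ x ∈ H, g • x ∈ H) (hne : H ≠ ⊥) :
    ∃ x ∈ H, x ≠ 1 ∧ ∀ g : G, g • x = x := by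
  let S : SubMulAction G M := ⟨H, fun g _ hx => hstable g _ hx⟩
  have : Finite S := ‹Finite H›
  have : Nontrivial H := (Subgroup.nontrivial_iff_ne_bot H).mpr hne
  have hdvd : p ∣ Nat.card S := hH.card_eq_or_dvd.resolve_left Finite.one_lt_card.ne'
  have h1 : (⟨1, H.one_mem⟩ : S) ∈ MulAction.fixedPoints G S := fun g => Subtype.ext (smul_one g)
  obtain ⟨⟨x, hxH⟩, hfix, hx1⟩ := hG.exists_fixed_point_of_prime_dvd_card_of_fixed_point S hdvd h1
  exact ⟨x, hxH, fun h => hx1 (Subtype.ext h.symm), fun g => congrArg Subtype.val (hfix g)⟩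

namespace MulAut

variable {M : Type*} [CommGroup M]

def twist (σ : MulAut M) : M →* M := σ.toMonoidHom / MonoidHom.id M

@[simp]
theorem twist_apply (σ : MulAut M) (x : M) : twist σ x = σ x / x := rfl

theorem twist_apply_of_commute {σ τ : MulAut M} (h : Commute σ τ) (x : M) :
    τ (twist σ x) = twist σ (τ x) := by
  rw [twist_apply, twist_apply, map_div, ← mul_apply, ← h.eq, mul_apply]

theorem apply_mem_range_twist {σ τ : MulAut M} (hτ : τ ∈ Subgroup.zpowers σ) {c : M}
    (hc : c ∈ (twist σ).range) : τ c ∈ (twist σ).range := by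
  obtain ⟨k, rfl⟩ := Subgroup.mem_zpowers_iff.mp hτ
  obtain ⟨x, rfl⟩ := hc
  exact ⟨(σ ^ k) x, (twist_apply_of_commute ((Commute.refl σ).zpow_right k) x).symm⟩

variable {p : ℕ} {σ : MulAut M}

theorem apply_eq_self_of_twist_pow_eq_one (hfix : ∀ x : M, σ x = x ↔ (σ ^ p) x = x) {y : M}
    (hc : σ (σ y / y) = σ y / y) (hp : (σ y / y) ^ p = 1) : σ y = y :=
  (hfix y).mpr <| by
    rw [pow_apply_of_apply_eq_mul σ (mul_div_cancel y (σ y)).symm hc, hp, mul_one]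

theorem apply_eq_self_of_twist_fixed (hfix : ∀ x : M, σ x = x ↔ (σ ^ p) x = x)
    (hM : IsPGroup p M) {x : M} (hc : σ (σ x / x) = σ x / x) : σ x = x := by
  obtain ⟨k, hk⟩ := hM (σ x / x)
  induction k generalizing x with
  | zero => rwa [pow_zero, pow_one, div_eq_one] at hk
  | succ k ih =>
    refine ih hc ?_
    have hy : σ (x ^ p ^ k) / x ^ p ^ k = (σ x / x) ^ p ^ k := by rw [map_pow, div_pow]
    rw [← hy, div_eq_one]
    refine apply_eq_self_of_twist_pow_eq_one hfix (by rw [hy, map_pow, hc]) ?_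
    rw [hy, ← pow_mul, ← pow_succ, hk]

end MulAut

/-- Let `p` be a prime and `M` a finite abelian `p`-group with an
automorphism `σ` of `p`-power order.  If the fixed points of `σ` and of `σ ^ p` coincide,
then `σ` is the identity on `M`. -/
theorem stmt_12 (p : ℕ) (hp : p.Prime)
    (M : Type*) [CommGroup M] [Finite M] (hM : IsPGroup p M)
    (σ : M ≃* M) (hord : ∃ j : ℕ, σ ^ (p ^ j) = 1)
    (hfix : ∀ x : M, σ x = x ↔ (σ ^ p) x = x) :
    ∀ x : M, σ x = x := by
  have : Fact p.Prime := ⟨hp⟩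
  obtain ⟨j, hj⟩ := hord
  suffices hT : (MulAut.twist σ).range = ⊥ by
    intro x
    simpa [div_eq_one] using DFunLike.congr_fun (MonoidHom.range_eq_bot_iff.mp hT) x
  by_contra hne
  have hstable : ∀ τ : Subgroup.zpowers σ, ∀ c ∈ (MulAut.twist σ).range,
      τ • c ∈ (MulAut.twist σ).range := fun τ _ hc => MulAut.apply_mem_range_twist τ.2 hc
  obtain ⟨_, ⟨x, rfl⟩, hc1, hc⟩ :=
    (IsPGroup.zpowers_of_pow_eq_one hj).exists_ne_one_mem_fixedPoints (hM.to_subgroup _) hstable hne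
  exact hc1 (by simpa [div_eq_one] using
    MulAut.apply_eq_self_of_twist_fixed hfix hM (hc ⟨σ, Subgroup.mem_zpowers σ⟩))
end
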